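/- (Monotone-error inequality for the stopping rule.) Let λ ≥ 0, δ ≥ 0, let A be a real m×n matrix, let b, b̃ ∈ ℝᵐ with ‖b̃ − b‖ ≤ δ, and let x̂ ∈ ℝⁿ with Ax̂ = b. Set L = ‖A‖₂². Let y₀, y₁ ∈ ℝᵐ, an index i, and arbitrary α, w ∈ ℝ be given, and define v = y₁ − y₀, x₁ = S_λ(Aᵀy₁), G = A·x₁ − b̃, u = Gᵢ·eᵢ, y₂ = y₁ − α·u + w·v, and x₂ = S_λ(Aᵀy₂). Define D_j = f(x̂) − f(x_j) − ⟨Aᵀy_j, x̂ − x_j⟩ for j = 1, 2. Then D₂ ≤ D₁ + δ·‖y₂ − y₁‖ + (L/2)·w²·‖v‖² + w·⟨G − α·L·u, v⟩ − (α − (L/2)·α²)·Gᵢ². -/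

import Mathlib

open scoped RealInnerProductSpace BigOperators
open Matrix

noncomputable def fobj {n : ℕ} (lam : ℝ) (x : EuclideanSpace ℝ (Fin n)) : ℝ :=
  lam * (∑ i, |x i|) + (1 / 2) * ‖x‖ ^ 2

noncomputable def softShrink {n : ℕ} (lam : ℝ) (x : EuclideanSpace ℝ (Fin n)) :
    EuclideanSpace ℝ (Fin n) :=
  WithLp.toLp 2 (fun i => Real.sign (x i) * max (|x i| - lam) 0)

noncomputable def mulVecE {m n : ℕ} (A : Matrix (Fin m) (Fin n) ℝ)
    (x : EuclideanSpace ℝ (Fin n)) : EuclideanSpace ℝ (Fin m) :=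
  Matrix.toEuclideanLin A x

/-- The operator (spectral) norm `‖A‖₂` of the linear map `x ↦ Ax` between
Euclidean spaces. -/
noncomputable def matOpNorm {m n : ℕ} (A : Matrix (Fin m) (Fin n) ℝ) : ℝ :=
  ‖LinearMap.toContinuousLinearMap (Matrix.toEuclideanLin A)‖


noncomputable def mfun (lam t : ℝ) : ℝ := max (|t| - lam) 0
noncomputable def shr (lam t : ℝ) : ℝ := Real.sign t * mfun lam t

noncomputable def Fstar {n : ℕ} (lam : ℝ) (z : EuclideanSpace ℝ (Fin n)) : ℝ :=
  ∑ i, (1/2) * (mfun lam (z i))^2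

lemma softShrink_apply {n : ℕ} (lam : ℝ) (z : EuclideanSpace ℝ (Fin n)) (i : Fin n) :
    softShrink lam z i = shr lam (z i) := rfl

lemma inner_eq {n : ℕ} (x y : EuclideanSpace ℝ (Fin n)) : ⟪x, y⟫ = ∑ i, x i * y i := by
  simp [PiLp.inner_apply, RCLike.inner_apply, conj_trivial]
  exact Finset.sum_congr rfl fun i _ => mul_comm _ _

lemma normsq_eq {n : ℕ} (x : EuclideanSpace ℝ (Fin n)) : ‖x‖^2 = ∑ i, (x i)^2 := by
  rw [← real_inner_self_eq_norm_sq, inner_eq]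
  exact Finset.sum_congr rfl fun i _ => (sq (x i)).symm

lemma mulVecE_apply {m n : ℕ} (A : Matrix (Fin m) (Fin n) ℝ) (x : EuclideanSpace ℝ (Fin n))
    (j : Fin m) : mulVecE A x j = ∑ k, A j k * x k := rfl

lemma adjE {m n : ℕ} (A : Matrix (Fin m) (Fin n) ℝ) (y : EuclideanSpace ℝ (Fin m))
    (x : EuclideanSpace ℝ (Fin n)) : ⟪mulVecE Aᵀ y, x⟫ = ⟪y, mulVecE A x⟫ := by
  simp only [inner_eq, mulVecE_apply, Matrix.transpose_apply]
  simp_rw [Finset.sum_mul, Finset.mul_sum]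
  rw [Finset.sum_comm]
  exact Finset.sum_congr rfl fun i _ => Finset.sum_congr rfl fun j _ => by ring

lemma opA_le {m n : ℕ} (A : Matrix (Fin m) (Fin n) ℝ) (x : EuclideanSpace ℝ (Fin n)) :
    ‖mulVecE A x‖ ≤ matOpNorm A * ‖x‖ := by
  have : mulVecE A x = (LinearMap.toContinuousLinearMap (Matrix.toEuclideanLin A)) x := rfl
  rw [this, matOpNorm]
  exact ContinuousLinearMap.le_opNorm _ x

lemma opAt_le {m n : ℕ} (A : Matrix (Fin m) (Fin n) ℝ) (y : EuclideanSpace ℝ (Fin m)) :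
    ‖mulVecE Aᵀ y‖ ≤ matOpNorm A * ‖y‖ := by
  set r := ‖mulVecE Aᵀ y‖ with hr
  have hr0 : 0 ≤ r := norm_nonneg _
  rcases eq_or_lt_of_le hr0 with h0 | h0
  · rw [← h0]; unfold matOpNorm; positivity
  · have h1 : r^2 = ⟪y, mulVecE A (mulVecE Aᵀ y)⟫ := by
      rw [← adjE, real_inner_self_eq_norm_sq]
    have h2 : ⟪y, mulVecE A (mulVecE Aᵀ y)⟫ ≤ ‖y‖ * (matOpNorm A * r) :=
      le_trans (real_inner_le_norm _ _) (by
        have := opA_le A (mulVecE Aᵀ y)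
        exact mul_le_mul_of_nonneg_left this (norm_nonneg _))
    nlinarith

lemma lemA {n : ℕ} {lam : ℝ} (hlam : 0 ≤ lam) (z : EuclideanSpace ℝ (Fin n))
    (hconj : ∀ t : ℝ, t * shr lam t
      = lam * |shr lam t| + (1/2) * (shr lam t)^2 + (1/2) * (mfun lam t)^2) :
    ⟪z, softShrink lam z⟫ = fobj lam (softShrink lam z) + Fstar lam z := by
  simp only [inner_eq, fobj, normsq_eq, Fstar, softShrink_apply]
  rw [Finset.mul_sum, Finset.mul_sum, ← Finset.sum_add_distrib, ← Finset.sum_add_distrib]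
  exact Finset.sum_congr rfl fun i _ => by
    have := hconj (z i); linarith [this]

lemma lemC {n : ℕ} {lam : ℝ} (hlam : 0 ≤ lam) (z₁ z₂ : EuclideanSpace ℝ (Fin n))
    (hsm : ∀ a b : ℝ, (1/2) * (mfun lam b)^2
      ≤ (1/2) * (mfun lam a)^2 + shr lam a * (b - a) + (1/2) * (b - a)^2) :
    Fstar lam z₂ ≤ Fstar lam z₁ + ⟪softShrink lam z₁, z₂ - z₁⟫ + (1/2) * ‖z₂ - z₁‖^2 := by
  simp only [Fstar, inner_eq, normsq_eq, softShrink_apply]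
  have hsub : ∀ i, (z₂ - z₁) i = z₂ i - z₁ i := fun i => rfl
  simp only [hsub]
  rw [Finset.mul_sum, ← Finset.sum_add_distrib, ← Finset.sum_add_distrib]
  exact Finset.sum_le_sum fun i _ => hsm (z₁ i) (z₂ i)



variable {lam : ℝ}

lemma mfun_nonneg (lam t : ℝ) : 0 ≤ mfun lam t := le_max_right _ _

lemma shr_eq_zero (hlam : 0 ≤ lam) {t : ℝ} (h : |t| ≤ lam) : shr lam t = 0 ∧ mfun lam t = 0 := by
  have : mfun lam t = 0 := max_eq_right (by linarith)
  exact ⟨by simp [shr, this], this⟩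

lemma abs_shr (hlam : 0 ≤ lam) (t : ℝ) : |shr lam t| = mfun lam t := by
  rcases le_or_gt (|t|) lam with h | h
  · obtain ⟨h1, h2⟩ := shr_eq_zero hlam h
    simp [h1, h2]
  · have ht : t ≠ 0 := by intro h0; simp [h0] at h; linarith
    rw [shr, abs_mul]
    rcases lt_trichotomy t 0 with h' | h' | h'
    · rw [Real.sign_of_neg h']; simp [abs_of_nonneg (mfun_nonneg lam t)]
    · exact absurd h' ht
    · rw [Real.sign_of_pos h']; simp [abs_of_nonneg (mfun_nonneg lam t)]

lemma rsign_mul_self (t : ℝ) : Real.sign t * t = |t| := by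
  rcases lt_trichotomy t 0 with h | h | h
  · rw [Real.sign_of_neg h, abs_of_neg h]; ring
  · simp [h]
  · rw [Real.sign_of_pos h, abs_of_pos h]; ring

lemma conj_pt (hlam : 0 ≤ lam) (t : ℝ) :
    t * shr lam t = lam * |shr lam t| + (1/2) * (shr lam t)^2 + (1/2) * (mfun lam t)^2 := by
  rw [abs_shr hlam]
  rcases le_or_gt (|t|) lam with h | h
  · obtain ⟨h1, h2⟩ := shr_eq_zero hlam h
    simp [h1, h2]
  · have hm : mfun lam t = |t| - lam := max_eq_left (by linarith)
    have h1 : t * shr lam t = |t| * mfun lam t := by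
      rw [shr]; rw [show t * (Real.sign t * mfun lam t) = (Real.sign t * t) * mfun lam t by ring,
        rsign_mul_self]
    have h2 : (shr lam t)^2 = (mfun lam t)^2 := by
      rw [← sq_abs, abs_shr hlam]
    rw [h1, h2, hm]; ring

lemma dist_shr (hlam : 0 ≤ lam) (t : ℝ) : |t - shr lam t| ≤ lam := by
  rcases le_or_gt (|t|) lam with h | h
  · obtain ⟨h1, _⟩ := shr_eq_zero hlam h
    rw [h1]; simpa using h
  · have hm : mfun lam t = |t| - lam := max_eq_left (by linarith)
    have ht : t ≠ 0 := by intro h0; simp [h0] at h; linarith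
    rcases lt_trichotomy t 0 with h' | h' | h'
    · rw [shr, Real.sign_of_neg h', hm, abs_of_neg h']
      rw [show t - -1 * (-t - lam) = -lam by ring]
      simp [abs_of_nonneg hlam]
    · exact absurd h' ht
    · rw [shr, Real.sign_of_pos h', hm, abs_of_pos h']
      rw [show t - 1 * (t - lam) = lam by ring]
      simp [abs_of_nonneg hlam]

lemma key_pt (hlam : 0 ≤ lam) (a b : ℝ) : |shr lam b| ≤ |shr lam a + (b - a)| := by
  have hd := dist_shr hlam a
  have hab : shr lam a + (b - a) = b - (a - shr lam a) := by ring
  rw [abs_shr hlam, hab]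
  rcases le_or_gt (|b|) lam with h | h
  · obtain ⟨_, h2⟩ := shr_eq_zero hlam h
    rw [h2]; positivity
  · have hm : mfun lam b = |b| - lam := max_eq_left (by linarith)
    rw [hm]
    obtain ⟨hd1, hd2⟩ := abs_le.mp hd
    rcases le_or_gt 0 b with hb | hb
    · have : |b| = b := abs_of_nonneg hb
      rw [this]
      have : b - (a - shr lam a) ≥ b - lam := by linarith
      calc b - lam ≤ b - (a - shr lam a) := this
        _ ≤ |b - (a - shr lam a)| := le_abs_self _
    · have : |b| = -b := abs_of_neg hb
      rw [this]
      have h1 : b - (a - shr lam a) ≤ b + lam := by linarith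
      calc -b - lam = -(b + lam) := by ring
        _ ≤ -(b - (a - shr lam a)) := by linarith
        _ ≤ |b - (a - shr lam a)| := neg_le_abs _

lemma smooth_pt (hlam : 0 ≤ lam) (a b : ℝ) :
    (1/2) * (mfun lam b)^2 ≤ (1/2) * (mfun lam a)^2 + shr lam a * (b - a) + (1/2) * (b - a)^2 := by
  have hk := key_pt hlam a b
  have h1 : (mfun lam b)^2 ≤ (shr lam a + (b - a))^2 := by
    rw [← abs_shr hlam b, ← sq_abs (shr lam a + (b-a))]
    exact pow_le_pow_left₀ (abs_nonneg _) hk 2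
  have h2 : (shr lam a)^2 = (mfun lam a)^2 := by rw [← sq_abs, abs_shr hlam]
  nlinarith [h1, h2]

/-- Monotone-error inequality underlying the ME stopping rule:
`D₂ ≤ D₁ + δ‖y₂ − y₁‖ + (L/2)w²‖v‖² + w⟨G − αLu, v⟩ − (α − (L/2)α²)Gᵢ²`. -/
theorem monotone_error_inequality {m n : ℕ} (lam δ : ℝ)
    (hlam : 0 ≤ lam) (hδ : 0 ≤ δ)
    (A : Matrix (Fin m) (Fin n) ℝ) (b btil : EuclideanSpace ℝ (Fin m))
    (hcont : ‖btil - b‖ ≤ δ)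
    (xhat : EuclideanSpace ℝ (Fin n)) (hxhat : mulVecE A xhat = b)
    (L : ℝ) (hL : L = matOpNorm A ^ 2)
    (y₀ y₁ : EuclideanSpace ℝ (Fin m)) (i : Fin m) (α w : ℝ)
    (v : EuclideanSpace ℝ (Fin m)) (hv : v = y₁ - y₀)
    (x₁ : EuclideanSpace ℝ (Fin n)) (hx₁ : x₁ = softShrink lam (mulVecE Aᵀ y₁))
    (G : EuclideanSpace ℝ (Fin m)) (hG : G = mulVecE A x₁ - btil)
    (u : EuclideanSpace ℝ (Fin m)) (hu : u = G i • EuclideanSpace.single i (1 : ℝ))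
    (y₂ : EuclideanSpace ℝ (Fin m)) (hy₂ : y₂ = y₁ - α • u + w • v)
    (x₂ : EuclideanSpace ℝ (Fin n)) (hx₂ : x₂ = softShrink lam (mulVecE Aᵀ y₂))
    (D₁ D₂ : ℝ)
    (hD₁ : D₁ = fobj lam xhat - fobj lam x₁ - ⟪mulVecE Aᵀ y₁, xhat - x₁⟫)
    (hD₂ : D₂ = fobj lam xhat - fobj lam x₂ - ⟪mulVecE Aᵀ y₂, xhat - x₂⟫) :
    D₂ ≤ D₁ + δ * ‖y₂ - y₁‖ + (L / 2) * w ^ 2 * ‖v‖ ^ 2 +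
      w * ⟪G - (α * L) • u, v⟫ - (α - (L / 2) * α ^ 2) * G i ^ 2 := by
  have hconj := conj_pt hlam
  have hsm := smooth_pt hlam
  set z₁ := mulVecE Aᵀ y₁ with hz₁
  set z₂ := mulVecE Aᵀ y₂ with hz₂
  have hA1 : ⟪z₁, x₁⟫ = fobj lam x₁ + Fstar lam z₁ := by
    rw [hx₁]; exact lemA hlam z₁ hconj
  have hA2 : ⟪z₂, x₂⟫ = fobj lam x₂ + Fstar lam z₂ := by
    rw [hx₂]; exact lemA hlam z₂ hconj
  have hD₁' : D₁ = fobj lam xhat - ⟪z₁, xhat⟫ + Fstar lam z₁ := by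
    rw [hD₁, inner_sub_right]; linarith [hA1]
  have hD₂' : D₂ = fobj lam xhat - ⟪z₂, xhat⟫ + Fstar lam z₂ := by
    rw [hD₂, inner_sub_right]; linarith [hA2]
  have hC : Fstar lam z₂ ≤ Fstar lam z₁ + ⟪x₁, z₂ - z₁⟫ + (1/2) * ‖z₂ - z₁‖^2 := by
    rw [hx₁]; exact lemC hlam z₁ z₂ hsm
  have hzz : z₂ - z₁ = mulVecE Aᵀ (y₂ - y₁) := by
    rw [hz₁, hz₂]; simp [mulVecE, map_sub]
  have hinner1 : ⟪x₁, z₂ - z₁⟫ = ⟪y₂ - y₁, mulVecE A x₁⟫ := by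
    rw [real_inner_comm, hzz, adjE]
  have hinnerhat : ⟪z₂, xhat⟫ - ⟪z₁, xhat⟫ = ⟪y₂ - y₁, b⟫ := by
    rw [← inner_sub_left, hzz, adjE, hxhat]
  have hnorm : ‖z₂ - z₁‖^2 ≤ L * ‖y₂ - y₁‖^2 := by
    rw [hzz, hL]
    have h := opAt_le A (y₂ - y₁)
    nlinarith [norm_nonneg (mulVecE Aᵀ (y₂ - y₁)), norm_nonneg (y₂ - y₁)]
  have hGsplit : mulVecE A x₁ = G + btil := by rw [hG]; abel
  have hCS : ⟪y₂ - y₁, btil - b⟫ ≤ δ * ‖y₂ - y₁‖ :=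
    calc ⟪y₂ - y₁, btil - b⟫ ≤ ‖y₂ - y₁‖ * ‖btil - b‖ := real_inner_le_norm _ _
      _ ≤ ‖y₂ - y₁‖ * δ := mul_le_mul_of_nonneg_left hcont (norm_nonneg _)
      _ = δ * ‖y₂ - y₁‖ := mul_comm _ _
  have e1 : ⟪y₂ - y₁, mulVecE A x₁⟫ - ⟪y₂ - y₁, b⟫
      = ⟪y₂ - y₁, G⟫ + ⟪y₂ - y₁, btil - b⟫ := by
    rw [hGsplit, inner_add_right, inner_sub_right]; ring
  have hmid : D₂ ≤ D₁ + ⟪y₂ - y₁, G⟫ + δ * ‖y₂ - y₁‖ + (L/2) * ‖y₂ - y₁‖^2 := by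
    linarith [hC, hinner1, hinnerhat, hCS, e1, hnorm]
  -- final algebraic identity
  have hd : y₂ - y₁ = w • v - α • u := by rw [hy₂]; abel
  have hone : ((EuclideanSpace.single i (1 : ℝ)) : EuclideanSpace ℝ (Fin m)) i = 1 := by
    simp [EuclideanSpace.single_apply]
  have hGu : ⟪G, u⟫ = G i ^ 2 := by
    rw [hu, real_inner_smul_right, EuclideanSpace.inner_single_right]
    simp [sq]
  have huv : ⟪u, v⟫ = G i * v i := by
    rw [hu, real_inner_smul_left, EuclideanSpace.inner_single_left]
    simp
  have huu : ⟪u, u⟫ = G i ^ 2 := by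
    rw [hu, real_inner_smul_left, real_inner_smul_right,
      EuclideanSpace.inner_single_left]
    simp [hone, sq]
  have hvv : ‖v‖^2 = ⟪v, v⟫ := (real_inner_self_eq_norm_sq v).symm
  have hdd : ‖y₂ - y₁‖^2 = ⟪y₂ - y₁, y₂ - y₁⟫ := (real_inner_self_eq_norm_sq _).symm
  have c1 : ⟪v, G⟫ = ⟪G, v⟫ := real_inner_comm G v
  have c2 : ⟪u, G⟫ = G i ^ 2 := by rw [real_inner_comm]; exact hGu
  have c3 : ⟪v, u⟫ = G i * v i := by rw [real_inner_comm]; exact huv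
  have hfinal : ⟪y₂ - y₁, G⟫ + (L/2) * ‖y₂ - y₁‖^2
      = (L / 2) * w ^ 2 * ‖v‖ ^ 2 + w * ⟪G - (α * L) • u, v⟫
        - (α - (L / 2) * α ^ 2) * G i ^ 2 := by
    rw [hdd, hd]
    simp only [inner_sub_left, inner_sub_right, real_inner_smul_left, real_inner_smul_right]
    rw [c1, c2, c3, huv, huu, hvv]
    ring
  linarith [hmid, hfinal]
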